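/- arXiv:2205.08674 — 5 statements merged into one kernel-verified Lean document; each statement's English description precedes it below -/
import Mathlib

section
/- Let Y₁,…,Y_T be random variables with 0 ≤ Y_t ≤ v̄ almost surely and E[Y_t] ≤ ρ, adapted to a filtration F₀ ⊆ … ⊆ F_T such that Y_t is F_t-measurable and independent of F_{t-1}. Let X₁,…,X_T ∈ [0,1] be random variables with X_t F_{t-1}-measurable. Then for any θ > 0, Pr(∑_{t=1}^T (X_t Y_t + (1 - X_t)ρ) ≥ ρT + θ) ≤ exp(-2θ² / (T v̄²)). -/
open MeasureTheory ProbabilityTheory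

private lemma hoeff_key {p : ℝ} (hp0 : 0 ≤ p) (hp1 : p ≤ 1) {u : ℝ} (hu : 0 ≤ u) :
    1 - p + p * Real.exp u ≤ Real.exp (p * u + u ^ 2 / 8) := by
  set D : ℝ → ℝ := fun x => 1 - p + p * Real.exp x with hD
  have hDpos : ∀ x, 0 < D x := by
    intro x
    show 0 < 1 - p + p * Real.exp x
    have h1 := Real.exp_pos x
    rcases le_total (Real.exp x) 1 with h | h
    · nlinarith [mul_nonneg (sub_nonneg.2 hp1) (sub_nonneg.2 h)]
    · nlinarith [mul_nonneg hp0 (sub_nonneg.2 h)]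
  have hDderiv : ∀ x, HasDerivAt D (p * Real.exp x) x := by
    intro x
    exact ((Real.hasDerivAt_exp x).const_mul p).const_add (1 - p)
  -- h' is the derivative of h
  set h' : ℝ → ℝ := fun x => p + x / 4 - p * Real.exp x / D x with hh'
  set h : ℝ → ℝ := fun x => p * x + x ^ 2 / 8 - Real.log (D x) with hh
  have hhderiv : ∀ x, HasDerivAt h (h' x) x := by
    intro x
    have hlog : HasDerivAt (fun x => Real.log (D x)) (p * Real.exp x / D x) x :=
      (hDderiv x).log (hDpos x).ne'
    have h1 : HasDerivAt (fun x : ℝ => p * x + x ^ 2 / 8) (p + x / 4) x := by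
      have := ((hasDerivAt_id x).const_mul p).add ((hasDerivAt_pow 2 x).div_const 8)
      simp only [id_eq, mul_one, pow_one] at this
      refine this.congr_deriv ?_
      ring
    exact h1.sub hlog
  have hh'deriv : ∀ x, HasDerivAt h'
      (1 / 4 - (p * Real.exp x * D x - p * Real.exp x * (p * Real.exp x)) / D x ^ 2) x := by
    intro x
    have hq : HasDerivAt (fun x => p * Real.exp x / D x)
        ((p * Real.exp x * D x - p * Real.exp x * (p * Real.exp x)) / D x ^ 2) x :=
      ((Real.hasDerivAt_exp x).const_mul p).div (hDderiv x) (hDpos x).ne'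
    have h1 : HasDerivAt (fun x : ℝ => p + x / 4) (1 / 4) x := by
      simpa using ((hasDerivAt_id x).div_const 4).const_add p
    exact h1.sub hq
  have hh'nonneg : ∀ x, (0:ℝ) ≤ 1 / 4 -
      (p * Real.exp x * D x - p * Real.exp x * (p * Real.exp x)) / D x ^ 2 := by
    intro x
    rw [sub_nonneg, div_le_iff₀ (pow_pos (hDpos x) 2)]
    have hDx : D x = 1 - p + p * Real.exp x := rfl
    rw [hDx]
    nlinarith [sq_nonneg (1 - p - p * Real.exp x), Real.exp_pos x, mul_nonneg hp0 (Real.exp_pos x).le,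
      mul_nonneg (sub_nonneg.2 hp1) (mul_nonneg hp0 (Real.exp_pos x).le)]
  have hh'mono : Monotone h' := monotone_of_hasDerivAt_nonneg hh'deriv hh'nonneg
  have hh'zero : h' 0 = 0 := by
    have hD0 : D 0 = 1 := by simp [hD]
    simp [hh', hD0]
  have hh'nn : ∀ x, 0 ≤ x → 0 ≤ h' x := fun x hx => hh'zero ▸ hh'mono hx
  have hhmono : MonotoneOn h (Set.Ici (0:ℝ)) := by
    apply monotoneOn_of_hasDerivWithinAt_nonneg (convex_Ici 0)
      (fun x _ => (hhderiv x).continuousAt.continuousWithinAt)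
      (fun x _ => (hhderiv x).hasDerivWithinAt)
    intro x hx
    rw [interior_Ici] at hx
    exact hh'nn x (le_of_lt hx)
  have hh0 : h 0 = 0 := by
    have hD0 : D 0 = 1 := by simp [hD]
    simp [hh, hD0]
  have hhu : 0 ≤ h u := hh0 ▸ hhmono (Set.self_mem_Ici) hu hu
  have hlog : Real.log (D u) ≤ p * u + u ^ 2 / 8 := by
    have : h u = p * u + u ^ 2 / 8 - Real.log (D u) := rfl
    linarith [hhu, this ▸ hhu]
  exact (Real.log_le_iff_le_exp (hDpos u)).1 hlog

private lemma indep_mono_right {Ω : Type*} {_m : MeasurableSpace Ω} {μ : Measure Ω}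
    {m₁ m₂ m₂' : MeasurableSpace Ω} (h : Indep m₁ m₂ μ) (h' : m₂' ≤ m₂) :
    Indep m₁ m₂' μ :=
  fun t1 t2 h1 h2 => h t1 t2 h1 (h' t2 h2)

/-- pointwise exponential bound via convexity of exp -/
private lemma step_pt {v ρ L x y : ℝ} (hv : 0 < v) (hρ0 : 0 ≤ ρ) (hL : 0 ≤ L)
    (hx0 : 0 ≤ x) (hx1 : x ≤ 1) (hy0 : 0 ≤ y) (hyv : y ≤ v) :
    Real.exp (L * (x * y + (1 - x) * ρ)) ≤
      Real.exp (L * (1 - x) * ρ) +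
        Real.exp (L * (1 - x) * ρ) * (Real.exp (L * x * v) - 1) / v * y := by
  have hsplit : L * (x * y + (1 - x) * ρ) = L * (1 - x) * ρ + L * (x * y) := by ring
  rw [hsplit, Real.exp_add]
  have hconv : Real.exp (L * (x * y)) ≤ 1 + (Real.exp (L * x * v) - 1) / v * y := by
    have hb0 : 0 ≤ y / v := div_nonneg hy0 hv.le
    have hb1 : y / v ≤ 1 := (div_le_one hv).2 hyv
    have h := convexOn_exp.2 (Set.mem_univ (0:ℝ)) (Set.mem_univ (L * x * v))
      (by linarith : 0 ≤ 1 - y / v) hb0 (by ring)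
    have harg : (1 - y / v) • (0:ℝ) + (y / v) • (L * x * v) = L * (x * y) := by
      field_simp
      simp only [smul_eq_mul]
      field_simp
      ring
    rw [harg] at h
    have : (1 - y / v) • Real.exp 0 + (y / v) • Real.exp (L * x * v)
        = 1 + (Real.exp (L * x * v) - 1) / v * y := by
      rw [Real.exp_zero]
      field_simp
      simp only [smul_eq_mul]
      field_simp
      ring
    rw [this] at h
    exact h
  have hA : 0 < Real.exp (L * (1 - x) * ρ) := Real.exp_pos _
  calc Real.exp (L * (1 - x) * ρ) * Real.exp (L * (x * y))
      ≤ Real.exp (L * (1 - x) * ρ) * (1 + (Real.exp (L * x * v) - 1) / v * y) := by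
        exact mul_le_mul_of_nonneg_left hconv hA.le
    _ = Real.exp (L * (1 - x) * ρ) +
        Real.exp (L * (1 - x) * ρ) * (Real.exp (L * x * v) - 1) / v * y := by ring

/-- coefficient bound via Hoeffding's lemma -/
private lemma step_coef {v ρ L x : ℝ} (hv : 0 < v) (hρ0 : 0 ≤ ρ) (hρv : ρ ≤ v) (hL : 0 ≤ L)
    (hx0 : 0 ≤ x) (hx1 : x ≤ 1) :
    Real.exp (L * (1 - x) * ρ) +
      ρ * (Real.exp (L * (1 - x) * ρ) * (Real.exp (L * x * v) - 1) / v) ≤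
      Real.exp (L * ρ + L ^ 2 * v ^ 2 / 8) := by
  have hv' : v ≠ 0 := hv.ne'
  have hp0 : 0 ≤ ρ / v := div_nonneg hρ0 hv.le
  have hp1 : ρ / v ≤ 1 := (div_le_one hv).2 hρv
  have hu : 0 ≤ L * x * v := by positivity
  have hkey := hoeff_key hp0 hp1 hu
  have hpu : ρ / v * (L * x * v) = L * x * ρ := by field_simp
  rw [hpu] at hkey
  have hid : Real.exp (L * (1 - x) * ρ) +
      ρ * (Real.exp (L * (1 - x) * ρ) * (Real.exp (L * x * v) - 1) / v)
      = Real.exp (L * (1 - x) * ρ) * (1 - ρ / v + ρ / v * Real.exp (L * x * v)) := by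
    field_simp
    ring
  rw [hid]
  calc Real.exp (L * (1 - x) * ρ) * (1 - ρ / v + ρ / v * Real.exp (L * x * v))
      ≤ Real.exp (L * (1 - x) * ρ) * Real.exp (L * x * ρ + (L * x * v) ^ 2 / 8) :=
        mul_le_mul_of_nonneg_left hkey (Real.exp_pos _).le
    _ = Real.exp (L * ρ + L ^ 2 * x ^ 2 * v ^ 2 / 8) := by
        rw [← Real.exp_add]; ring_nf
    _ ≤ Real.exp (L * ρ + L ^ 2 * v ^ 2 / 8) := by
        apply Real.exp_le_exp.2
        have hx2 : x ^ 2 ≤ 1 := by nlinarith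
        have : L ^ 2 * x ^ 2 * v ^ 2 ≤ L ^ 2 * v ^ 2 := by
          nlinarith [mul_nonneg (sq_nonneg L) (sq_nonneg v)]
        linarith

/-- Concentration bound (Lemma 3.5): if `Yₜ ∈ [0, v̄]` is `ℱₜ`-measurable, independent of
`ℱₜ₋₁`, with mean at most `ρ`, and `Xₜ ∈ [0,1]` is `ℱₜ₋₁`-measurable, then
`∑ₜ (XₜYₜ + (1−Xₜ)ρ)` exceeds `ρT + θ` with probability at most `exp(−2θ²/(T v̄²))`. -/
theorem stmt_1 {Ω : Type*} [m : MeasurableSpace Ω] (μ : Measure Ω) [IsProbabilityMeasure μ]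
    (T : ℕ) (vbar ρ : ℝ) (hvbar : 0 ≤ vbar) (hρ : 0 ≤ ρ)
    (ℱ : Filtration ℕ m) (Y X : ℕ → Ω → ℝ)
    (hYbd : ∀ t ∈ Finset.Icc 1 T, ∀ᵐ ω ∂μ, Y t ω ∈ Set.Icc 0 vbar)
    (hYint : ∀ t ∈ Finset.Icc 1 T, Integrable (Y t) μ)
    (hYmean : ∀ t ∈ Finset.Icc 1 T, ∫ ω, Y t ω ∂μ ≤ ρ)
    (hYmeas : ∀ t ∈ Finset.Icc 1 T, Measurable[ℱ t] (Y t))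
    (hYindep : ∀ t ∈ Finset.Icc 1 T,
      Indep (MeasurableSpace.comap (Y t) inferInstance) (ℱ (t - 1)) μ)
    (hXbd : ∀ t ∈ Finset.Icc 1 T, ∀ ω, X t ω ∈ Set.Icc (0:ℝ) 1)
    (hXmeas : ∀ t ∈ Finset.Icc 1 T, Measurable[ℱ (t - 1)] (X t))
    (θ : ℝ) (hθ : 0 < θ) :
    (μ {ω | ρ * T + θ ≤ ∑ t ∈ Finset.Icc 1 T, (X t ω * Y t ω + (1 - X t ω) * ρ)}).toReal
      ≤ Real.exp (-2 * θ ^ 2 / (T * vbar ^ 2)) := by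
  have htriv : ∀ (s : Set Ω), (μ s).toReal ≤ 1 := fun s => by
    calc (μ s).toReal ≤ (μ Set.univ).toReal :=
          ENNReal.toReal_mono (measure_ne_top _ _) (measure_mono (Set.subset_univ _))
      _ = 1 := by simp
  -- a.e. bound on all Y simultaneously
  have hae : ∀ᵐ ω ∂μ, ∀ t, t ∈ Finset.Icc 1 T → Y t ω ∈ Set.Icc 0 vbar := by
    rw [ae_all_iff]
    intro t
    by_cases ht : t ∈ Finset.Icc 1 T
    · filter_upwards [hYbd t ht] with ω h _
      exact h
    · filter_upwards with ω h
      exact absurd h ht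
  rcases Nat.eq_zero_or_pos T with hT0 | hTpos
  · subst hT0
    have h1 : Real.exp (-2 * θ ^ 2 / ((0:ℕ) * vbar ^ 2)) = 1 := by norm_num
    rw [h1]
    exact htriv _
  rcases eq_or_lt_of_le hvbar with hv0 | hv
  · rw [← hv0]
    have h1 : Real.exp (-2 * θ ^ 2 / ((T:ℝ) * 0 ^ 2)) = 1 := by norm_num
    rw [h1]
    exact htriv _
  rcases le_or_gt ρ vbar with hρv | hvρ
  swap
  · -- vbar < ρ : the event is null
    have hnull : μ {ω | ρ * T + θ ≤
        ∑ t ∈ Finset.Icc 1 T, (X t ω * Y t ω + (1 - X t ω) * ρ)} = 0 := by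
      rw [measure_eq_zero_iff_ae_notMem]
      filter_upwards [hae] with ω hω
      simp only [Set.mem_setOf_eq, not_le]
      have hsum : ∑ t ∈ Finset.Icc 1 T, (X t ω * Y t ω + (1 - X t ω) * ρ)
          ≤ ∑ t ∈ Finset.Icc 1 T, ρ := by
        apply Finset.sum_le_sum
        intro t ht
        have hx := hXbd t ht ω
        have hy := hω t ht
        nlinarith [hx.1, hx.2, hy.1, hy.2]
      have hcard : ∑ t ∈ Finset.Icc 1 T, ρ = ρ * T := by
        rw [Finset.sum_const, Nat.card_Icc]
        simp [nsmul_eq_mul, mul_comm]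
      linarith [hsum, hcard ▸ hsum]
    rw [hnull]
    simpa using (Real.exp_pos _).le
  -- Main case : 0 < vbar, ρ ≤ vbar, 0 < T
  have hv' : vbar ≠ 0 := hv.ne'
  have hT' : (0:ℝ) < (T:ℝ) := by exact_mod_cast hTpos
  set L : ℝ := 4 * θ / (T * vbar ^ 2) with hLdef
  have hL : 0 < L := div_pos (by positivity) (mul_pos hT' (pow_pos hv 2))
  set tr : ℝ → ℝ := fun y => min (max y 0) vbar with htrdef
  have htrm : Measurable tr := (measurable_id.max measurable_const).min measurable_const
  set Y' : ℕ → Ω → ℝ := fun t ω => tr (Y t ω) with hY'def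
  set Z : ℕ → Ω → ℝ := fun t ω => X t ω * Y' t ω + (1 - X t ω) * ρ with hZdef
  set W : ℕ → Ω → ℝ := fun n ω => ∏ t ∈ Finset.Icc 1 n, Real.exp (L * Z t ω) with hWdef
  -- basic bounds
  have hY'bd : ∀ t ω, 0 ≤ Y' t ω ∧ Y' t ω ≤ vbar := fun t ω =>
    ⟨le_min (le_max_right _ _) hvbar, min_le_right _ _⟩
  have hZbd : ∀ t ∈ Finset.Icc 1 T, ∀ ω, 0 ≤ Z t ω ∧ Z t ω ≤ vbar + ρ := by
    intro t ht ω
    have hx := hXbd t ht ω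
    have hy := hY'bd t ω
    constructor
    · have : (0:ℝ) ≤ X t ω * Y' t ω := mul_nonneg hx.1 hy.1
      have : (0:ℝ) ≤ (1 - X t ω) * ρ := mul_nonneg (by linarith [hx.2]) hρ
      simp only [hZdef]
      nlinarith [mul_nonneg hx.1 hy.1]
    · simp only [hZdef]
      nlinarith [hx.1, hx.2, hy.1, hy.2]
  -- measurability
  have hXm : ∀ t ∈ Finset.Icc 1 T, Measurable (X t) := fun t ht =>
    (hXmeas t ht).mono (ℱ.le _) le_rfl
  have hY'mF : ∀ t ∈ Finset.Icc 1 T, Measurable[ℱ t] (Y' t) := fun t ht =>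
    htrm.comp (hYmeas t ht)
  have hY'm : ∀ t ∈ Finset.Icc 1 T, Measurable (Y' t) := fun t ht =>
    (hY'mF t ht).mono (ℱ.le _) le_rfl
  have hZmF : ∀ n, ∀ t ∈ Finset.Icc 1 T, t ≤ n → Measurable[ℱ n] (Z t) := by
    intro n t ht htn
    have hXf : Measurable[ℱ n] (X t) :=
      (hXmeas t ht).mono (ℱ.mono (by omega : t - 1 ≤ n)) le_rfl
    have hYf : Measurable[ℱ n] (Y' t) := (hY'mF t ht).mono (ℱ.mono htn) le_rfl
    exact (hXf.mul hYf).add ((measurable_const.sub hXf).mul measurable_const)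
  have hWmF : ∀ n, n ≤ T → Measurable[ℱ n] (W n) := by
    intro n hn
    apply Finset.measurable_prod
    intro t ht
    rw [Finset.mem_Icc] at ht
    exact Real.measurable_exp.comp (measurable_const.mul
      (hZmF n t (Finset.mem_Icc.2 ⟨ht.1, le_trans ht.2 hn⟩) ht.2))
  have hWm : ∀ n, n ≤ T → Measurable (W n) := fun n hn =>
    (hWmF n hn).mono (ℱ.le _) le_rfl
  -- bounds on W
  set C : ℝ := Real.exp (L * (vbar + ρ)) with hCdef
  have hC1 : 1 ≤ C := Real.one_le_exp (by positivity)
  have hWbd : ∀ n, n ≤ T → ∀ ω, 0 ≤ W n ω ∧ W n ω ≤ C ^ T := by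
    intro n hn ω
    constructor
    · exact Finset.prod_nonneg fun t _ => (Real.exp_pos _).le
    · calc W n ω ≤ ∏ t ∈ Finset.Icc 1 n, C := by
            apply Finset.prod_le_prod (fun t _ => (Real.exp_pos _).le)
            intro t ht
            rw [Finset.mem_Icc] at ht
            have hz := hZbd t (Finset.mem_Icc.2 ⟨ht.1, le_trans ht.2 hn⟩) ω
            exact Real.exp_le_exp.2 (mul_le_mul_of_nonneg_left hz.2 hL.le)
        _ = C ^ n := by rw [Finset.prod_const, Nat.card_Icc]; norm_num
        _ ≤ C ^ T := pow_le_pow_right₀ hC1 hn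
  -- integrability helper
  have intbdd : ∀ (f : Ω → ℝ) (Cb : ℝ), Measurable f → (∀ ω, |f ω| ≤ Cb) →
      Integrable f μ := fun f Cb hm hb =>
    (integrable_const Cb).mono' hm.aestronglyMeasurable
      (ae_of_all _ fun ω => by simpa [Real.norm_eq_abs] using hb ω)
  -- key induction
  set K : ℝ := Real.exp (L * ρ + L ^ 2 * vbar ^ 2 / 8) with hKdef
  have hKpos : 0 < K := Real.exp_pos _
  have key : ∀ n, n ≤ T → ∫ ω, W n ω ∂μ ≤ K ^ n := by
    intro n
    induction n with
    | zero =>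
      intro _
      have h1 : W 0 = fun _ => (1:ℝ) := funext fun ω => by
        simp [hWdef, Finset.Icc_eq_empty_of_lt (by norm_num : (0:ℕ) < 1)]
      rw [h1]
      simp
    | succ n ih =>
      intro hn1
      have hn : n ≤ T := Nat.le_of_succ_le hn1
      have htm : n + 1 ∈ Finset.Icc 1 T := Finset.mem_Icc.2 ⟨Nat.le_add_left 1 n, hn1⟩
      have hx1 : ∀ ω, X (n+1) ω ∈ Set.Icc (0:ℝ) 1 := hXbd (n+1) htm
      -- the conditional coefficient functions
      set A : Ω → ℝ := fun ω => Real.exp (L * (1 - X (n+1) ω) * ρ) with hAdef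
      set B : Ω → ℝ := fun ω =>
        Real.exp (L * (1 - X (n+1) ω) * ρ) * (Real.exp (L * X (n+1) ω * vbar) - 1) / vbar
        with hBdef
      have hAbd : ∀ ω, 0 ≤ A ω ∧ A ω ≤ Real.exp (L * ρ) := by
        intro ω
        refine ⟨(Real.exp_pos _).le, Real.exp_le_exp.2 ?_⟩
        have hx := hx1 ω
        nlinarith [mul_nonneg (mul_nonneg hL.le hρ) hx.1]
      have hBbd : ∀ ω, 0 ≤ B ω ∧ B ω ≤ Real.exp (L * ρ) * Real.exp (L * vbar) / vbar := by
        intro ω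
        have hx := hx1 ω
        have he1 : 1 ≤ Real.exp (L * X (n+1) ω * vbar) :=
          Real.one_le_exp (mul_nonneg (mul_nonneg hL.le hx.1) hv.le)
        have he2 : Real.exp (L * X (n+1) ω * vbar) ≤ Real.exp (L * vbar) :=
          Real.exp_le_exp.2 (by nlinarith [mul_nonneg (mul_nonneg hL.le hv.le) (sub_nonneg.2 hx.2)])
        constructor
        · exact div_nonneg (mul_nonneg (Real.exp_pos _).le (by linarith)) hv.le
        · refine (div_le_div_iff_of_pos_right hv).2 ?_
          exact mul_le_mul (hAbd ω).2 (by linarith) (by linarith) (Real.exp_nonneg _)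
      -- decomposition of the product
      have hWsucc : ∀ ω, W (n+1) ω = W n ω * Real.exp (L * Z (n+1) ω) := by
        intro ω
        simp only [hWdef]
        rw [← Finset.insert_Icc_right_eq_Icc_add_one (by omega : 1 ≤ n + 1),
          Finset.prod_insert (by simp)]
        ring
      -- measurability of the pieces
      have hWnm : Measurable (W n) := hWm n hn
      have hXm1 : Measurable (X (n+1)) := hXm (n+1) htm
      have hAm : Measurable A :=
        Real.measurable_exp.comp (((measurable_const.sub hXm1).const_mul L).mul_const ρ)
      have hBm : Measurable B := by
        apply Measurable.div_const
        exact (Real.measurable_exp.comp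
          (((measurable_const.sub hXm1).const_mul L).mul_const ρ)).mul
          ((Real.measurable_exp.comp ((hXm1.const_mul L).mul_const vbar)).sub
            measurable_const)
      have hY'm1 : Measurable (Y' (n+1)) := hY'm (n+1) htm
      -- integrability of the pieces
      have hWbdn := hWbd n hn
      have hintW : Integrable (W n) μ := intbdd _ (C ^ T) hWnm fun ω => by
        rw [abs_of_nonneg (hWbdn ω).1]; exact (hWbdn ω).2
      have hintWe : Integrable (fun ω => W n ω * Real.exp (L * Z (n+1) ω)) μ := by
        have hWbd1 := hWbd (n+1) hn1
        refine intbdd _ (C ^ T) (by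
          have := hWm (n+1) hn1
          intro s hs
          have h2 : (fun ω => W n ω * Real.exp (L * Z (n+1) ω)) = W (n+1) :=
            funext fun ω => (hWsucc ω).symm
          rw [h2]
          exact this hs) fun ω => by
          rw [← hWsucc ω, abs_of_nonneg (hWbd1 ω).1]
          exact (hWbd1 ω).2
      have hintWA : Integrable (fun ω => W n ω * A ω) μ :=
        intbdd _ (C ^ T * Real.exp (L * ρ)) (hWnm.mul hAm) fun ω => by
          rw [abs_of_nonneg (mul_nonneg (hWbdn ω).1 (hAbd ω).1)]
          exact mul_le_mul (hWbdn ω).2 (hAbd ω).2 (hAbd ω).1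
            (pow_nonneg (le_trans zero_le_one hC1) T)
      have hintWB : Integrable (fun ω => W n ω * B ω) μ :=
        intbdd _ (C ^ T * (Real.exp (L * ρ) * Real.exp (L * vbar) / vbar))
          (hWnm.mul hBm) fun ω => by
          rw [abs_of_nonneg (mul_nonneg (hWbdn ω).1 (hBbd ω).1)]
          exact mul_le_mul (hWbdn ω).2 (hBbd ω).2 (hBbd ω).1
            (pow_nonneg (le_trans zero_le_one hC1) T)
      have hintWBY : Integrable (fun ω => W n ω * B ω * Y' (n+1) ω) μ :=
        intbdd _ (C ^ T * (Real.exp (L * ρ) * Real.exp (L * vbar) / vbar) * vbar)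
          ((hWnm.mul hBm).mul hY'm1) fun ω => by
          rw [abs_of_nonneg (mul_nonneg (mul_nonneg (hWbdn ω).1 (hBbd ω).1)
            (hY'bd (n+1) ω).1)]
          refine mul_le_mul ?_ (hY'bd (n+1) ω).2 (hY'bd (n+1) ω).1 ?_
          · exact mul_le_mul (hWbdn ω).2 (hBbd ω).2 (hBbd ω).1
              (pow_nonneg (le_trans zero_le_one hC1) T)
          · positivity
      have hintY' : Integrable (Y' (n+1)) μ :=
        intbdd _ vbar hY'm1 fun ω => by
          rw [abs_of_nonneg (hY'bd (n+1) ω).1]; exact (hY'bd (n+1) ω).2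
      -- independence : (W n * B) is ℱ n-measurable, Y' (n+1) independent of ℱ n
      have hGmF : Measurable[ℱ n] (fun ω => W n ω * B ω) := by
        have hXf : Measurable[ℱ n] (X (n+1)) := hXmeas (n+1) htm
        have hBf : Measurable[ℱ n] B := by
          apply Measurable.div_const
          exact (Real.measurable_exp.comp
            (((measurable_const.sub hXf).const_mul L).mul_const ρ)).mul
            ((Real.measurable_exp.comp ((hXf.const_mul L).mul_const vbar)).sub
              measurable_const)
        exact (hWmF n hn).mul hBf
      have hindY : IndepFun (Y (n+1)) (fun ω => W n ω * B ω) μ := by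
        rw [IndepFun_iff_Indep]
        exact indep_mono_right (hYindep (n+1) htm) hGmF.comap_le
      have hindY' : IndepFun (Y' (n+1)) (fun ω => W n ω * B ω) μ := by
        have h := hindY.comp htrm measurable_id
        exact h
      have hmul : ∫ ω, W n ω * B ω * Y' (n+1) ω ∂μ
          = (∫ ω, W n ω * B ω ∂μ) * ∫ ω, Y' (n+1) ω ∂μ :=
        hindY'.symm.integral_fun_mul_eq_mul_integral hintWB.aestronglyMeasurable hintY'.aestronglyMeasurable
      -- mean of Y' is at most ρ
      have hY'mean : ∫ ω, Y' (n+1) ω ∂μ ≤ ρ := by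
        have heq : (Y' (n+1)) =ᵐ[μ] (Y (n+1)) := by
          filter_upwards [hYbd (n+1) htm] with ω h
          simp only [hY'def, htrdef]
          rw [max_eq_left h.1, min_eq_left h.2]
        rw [integral_congr_ae heq]
        exact hYmean (n+1) htm
      have hintWBY' : (0:ℝ) ≤ ∫ ω, W n ω * B ω ∂μ :=
        integral_nonneg fun ω => mul_nonneg (hWbdn ω).1 (hBbd ω).1
      -- pointwise bounds
      have hpt1 : ∀ ω, W n ω * Real.exp (L * Z (n+1) ω)
          ≤ W n ω * A ω + W n ω * B ω * Y' (n+1) ω := by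
        intro ω
        have hx := hx1 ω
        have hy := hY'bd (n+1) ω
        have hstep := step_pt hv hρ hL.le hx.1 hx.2 hy.1 hy.2
        calc W n ω * Real.exp (L * Z (n+1) ω)
            ≤ W n ω * (Real.exp (L * (1 - X (n+1) ω) * ρ) +
              Real.exp (L * (1 - X (n+1) ω) * ρ) *
                (Real.exp (L * X (n+1) ω * vbar) - 1) / vbar * Y' (n+1) ω) :=
              mul_le_mul_of_nonneg_left hstep (hWbdn ω).1
          _ = W n ω * A ω + W n ω * B ω * Y' (n+1) ω := by
              simp only [hAdef, hBdef]; ring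
      have hpt2 : ∀ ω, W n ω * A ω + W n ω * B ω * ρ ≤ W n ω * K := by
        intro ω
        have hx := hx1 ω
        have hcoef := step_coef hv hρ hρv hL.le hx.1 hx.2
        calc W n ω * A ω + W n ω * B ω * ρ
            = W n ω * (Real.exp (L * (1 - X (n+1) ω) * ρ) +
              ρ * (Real.exp (L * (1 - X (n+1) ω) * ρ) *
                (Real.exp (L * X (n+1) ω * vbar) - 1) / vbar)) := by
              simp only [hAdef, hBdef]; ring
          _ ≤ W n ω * K := mul_le_mul_of_nonneg_left (hKdef ▸ hcoef) (hWbdn ω).1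
      -- the chain
      calc ∫ ω, W (n+1) ω ∂μ
          = ∫ ω, W n ω * Real.exp (L * Z (n+1) ω) ∂μ :=
            integral_congr_ae (ae_of_all _ hWsucc)
        _ ≤ ∫ ω, (W n ω * A ω + W n ω * B ω * Y' (n+1) ω) ∂μ :=
            integral_mono hintWe (hintWA.add hintWBY) hpt1
        _ = (∫ ω, W n ω * A ω ∂μ) + ∫ ω, W n ω * B ω * Y' (n+1) ω ∂μ :=
            integral_add hintWA hintWBY
        _ = (∫ ω, W n ω * A ω ∂μ) + (∫ ω, W n ω * B ω ∂μ) * ∫ ω, Y' (n+1) ω ∂μ := by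
            rw [hmul]
        _ ≤ (∫ ω, W n ω * A ω ∂μ) + (∫ ω, W n ω * B ω ∂μ) * ρ := by
            exact add_le_add_right (mul_le_mul_of_nonneg_left hY'mean hintWBY') _
        _ = ∫ ω, (W n ω * A ω + W n ω * B ω * ρ) ∂μ := by
            rw [integral_add hintWA (hintWB.mul_const ρ), integral_mul_const]
        _ ≤ ∫ ω, W n ω * K ∂μ :=
            integral_mono (hintWA.add (hintWB.mul_const ρ)) (hintW.mul_const K) hpt2
        _ = (∫ ω, W n ω ∂μ) * K := integral_mul_const K _
        _ ≤ K ^ n * K := mul_le_mul_of_nonneg_right (ih hn) hKpos.le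
        _ = K ^ (n+1) := (pow_succ K n).symm
  -- endgame
  have hWT := key T le_rfl
  set ε : ℝ := Real.exp (L * (ρ * T + θ)) with hεdef
  have hεpos : 0 < ε := Real.exp_pos _
  have hEsub : {ω | ρ * T + θ ≤ ∑ t ∈ Finset.Icc 1 T, (X t ω * Y t ω + (1 - X t ω) * ρ)}
      ⊆ {ω | ρ * T + θ ≤ ∑ t ∈ Finset.Icc 1 T, Z t ω} ∪
        {ω | ¬ ∀ t, t ∈ Finset.Icc 1 T → Y t ω ∈ Set.Icc 0 vbar} := by
    intro ω hω
    by_cases hgood : ∀ t, t ∈ Finset.Icc 1 T → Y t ω ∈ Set.Icc 0 vbar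
    · left
      have hsum : ∑ t ∈ Finset.Icc 1 T, Z t ω
          = ∑ t ∈ Finset.Icc 1 T, (X t ω * Y t ω + (1 - X t ω) * ρ) := by
        apply Finset.sum_congr rfl
        intro t ht
        have h := hgood t ht
        simp only [hZdef, hY'def, htrdef]
        rw [max_eq_left h.1, min_eq_left h.2]
      rw [Set.mem_setOf_eq, hsum]
      exact hω
    · right; exact hgood
  have hnull : μ {ω | ¬ ∀ t, t ∈ Finset.Icc 1 T → Y t ω ∈ Set.Icc 0 vbar} = 0 :=
    ae_iff.1 hae
  have hmono1 : μ {ω | ρ * T + θ ≤ ∑ t ∈ Finset.Icc 1 T,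
      (X t ω * Y t ω + (1 - X t ω) * ρ)}
      ≤ μ {ω | ρ * T + θ ≤ ∑ t ∈ Finset.Icc 1 T, Z t ω} :=
    le_trans (measure_mono hEsub)
      (le_trans (measure_union_le _ _) (by rw [hnull, add_zero]))
  have hsub2 : {ω | ρ * T + θ ≤ ∑ t ∈ Finset.Icc 1 T, Z t ω} ⊆ {ω | ε ≤ W T ω} := by
    intro ω hω
    rw [Set.mem_setOf_eq] at hω ⊢
    have hWexp : W T ω = Real.exp (L * ∑ t ∈ Finset.Icc 1 T, Z t ω) := by
      simp only [hWdef]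
      rw [Finset.mul_sum, Real.exp_sum]
    rw [hWexp, hεdef]
    exact Real.exp_le_exp.2 (mul_le_mul_of_nonneg_left hω hL.le)
  have hintWT : Integrable (W T) μ := intbdd _ (C ^ T) (hWm T le_rfl) fun ω => by
    rw [abs_of_nonneg (hWbd T le_rfl ω).1]; exact (hWbd T le_rfl ω).2
  have hmarkov := mul_meas_ge_le_integral_of_nonneg
    (ae_of_all _ fun ω => (hWbd T le_rfl ω).1) hintWT ε
  have h1 : (μ {ω | ρ * T + θ ≤ ∑ t ∈ Finset.Icc 1 T,
      (X t ω * Y t ω + (1 - X t ω) * ρ)}).toReal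
      ≤ (μ {ω | ε ≤ W T ω}).toReal :=
    ENNReal.toReal_mono (measure_ne_top _ _) (le_trans hmono1 (measure_mono hsub2))
  have h2 : (μ {ω | ε ≤ W T ω}).toReal ≤ (∫ ω, W T ω ∂μ) / ε := by
    rw [le_div_iff₀ hεpos]
    calc (μ {ω | ε ≤ W T ω}).toReal * ε = ε * (μ {x | ε ≤ W T x}).toReal := by ring
      _ ≤ ∫ ω, W T ω ∂μ := hmarkov
  have h3 : (∫ ω, W T ω ∂μ) / ε ≤ K ^ T / ε := by gcongr
  have hval : K ^ T / ε = Real.exp (-2 * θ ^ 2 / (T * vbar ^ 2)) := by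
    rw [hKdef, hεdef, ← Real.exp_nat_mul, ← Real.exp_sub]
    congr 1
    rw [hLdef]
    field_simp
    ring
  rw [← hval]
  exact le_trans h1 (le_trans h2 h3)
end

section
/- Let Z : [0, μ̄] → ℝ be nonincreasing and λ-Lipschitz, let H(μ) = ρμ − ∫₀^μ Z(x)dx, and let μ* ∈ [0, μ̄] satisfy either Z(μ*) = ρ, or μ* = 0 and Z(0) ≤ ρ. Then for every μ ∈ [0, μ̄], |Z(μ) − Z(μ*)| ≤ √(2λ (H(μ) − H(μ*))). -/
/-!
Write `Δ = |Z μ - Z μ*|`. The optimality condition makes `H μ - H μ* = ∫_{μ*}^{μ} (ρ - Z)`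
dominate the integral of `|Z - Z μ*|` over the interval between `μ*` and `μ` (if `μ < μ*`, then
`Z μ* = ρ`, since the other alternative forces `μ* = 0`). As `Z` is monotone and `λ`-Lipschitz,
`|Z - Z μ*|` stays above the ramp of slope `λ` that reaches `Δ` at `μ`, and the triangle under
that ramp has area `Δ² / (2λ)`.
-/

open MeasureTheory (volume)
open intervalIntegral Set

theorem integral_ramp {lam : ℝ} (hlam : lam ≠ 0) (b d : ℝ) :
    ∫ x in b - d / lam..b, (d - lam * (b - x)) = d ^ 2 / (2 * lam) := by
  rw [intervalIntegral.integral_comp_sub_left (fun u => d - lam * u) b]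
  simp only [sub_self, sub_sub_cancel]
  rw [intervalIntegral.integral_sub intervalIntegrable_const (intervalIntegrable_id.const_mul lam),
    integral_const, integral_const_mul, integral_id, smul_eq_mul]
  field_simp
  ring

section Ramp

variable {g : ℝ → ℝ} {a b lam : ℝ}

theorem sq_le_two_mul_integral_of_ramp_le_right (hlam : 0 ≤ lam) (hab : a ≤ b)
    (hg : IntervalIntegrable g volume a b) (hnonneg : ∀ x ∈ Icc a b, 0 ≤ g x)
    (hramp : ∀ x ∈ Icc a b, g b - lam * (b - x) ≤ g x) (hgb : g b ≤ lam * (b - a)) :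
    g b ^ 2 ≤ 2 * lam * ∫ x in a..b, g x := by
  obtain rfl | hlam := hlam.eq_or_lt
  · have : g b = 0 := le_antisymm (by simpa using hgb) (hnonneg b ⟨hab, le_rfl⟩)
    simp [this]
  set c := b - g b / lam
  have hc : c ∈ Icc a b := by
    have hdiv : g b / lam ≤ b - a := (div_le_iff₀ hlam).mpr (by linarith)
    have : 0 ≤ g b / lam := div_nonneg (hnonneg b ⟨hab, le_rfl⟩) hlam.le
    constructor <;> linarith
  have hac : IntervalIntegrable g volume a c := hg.mono_set (uIcc_subset_uIcc_left (by
    rw [uIcc_of_le hab]; exact hc))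
  have hcb : IntervalIntegrable g volume c b := hg.mono_set (uIcc_subset_uIcc_right (by
    rw [uIcc_of_le hab]; exact hc))
  have hleft : 0 ≤ ∫ x in a..c, g x :=
    integral_nonneg hc.1 fun x hx => hnonneg x ⟨hx.1, hx.2.trans hc.2⟩
  have hright : g b ^ 2 / (2 * lam) ≤ ∫ x in c..b, g x := by
    rw [← integral_ramp hlam.ne']
    exact integral_mono_on hc.2 ((by fun_prop : Continuous _).intervalIntegrable _ _) hcb
      fun x hx => hramp x ⟨hc.1.trans hx.1, hx.2⟩
  rw [← integral_add_adjacent_intervals hac hcb]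
  calc g b ^ 2 = 2 * lam * (g b ^ 2 / (2 * lam)) := by field_simp
    _ ≤ _ := by gcongr; linarith

theorem sq_le_two_mul_integral_of_ramp_le_left (hlam : 0 ≤ lam) (hab : a ≤ b)
    (hg : IntervalIntegrable g volume a b) (hnonneg : ∀ x ∈ Icc a b, 0 ≤ g x)
    (hramp : ∀ x ∈ Icc a b, g a - lam * (x - a) ≤ g x) (hga : g a ≤ lam * (b - a)) :
    g a ^ 2 ≤ 2 * lam * ∫ x in a..b, g x := by
  have hmem : ∀ x ∈ Icc a b, a + b - x ∈ Icc a b :=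
    fun x hx => ⟨by linarith [hx.2], by linarith [hx.1]⟩
  have key := sq_le_two_mul_integral_of_ramp_le_right (g := fun x => g (a + b - x)) hlam hab
    (by simpa using hg.symm.comp_sub_left (a + b))
    (fun x hx => hnonneg _ (hmem x hx))
    (fun x hx => by
      have := hramp _ (hmem x hx)
      rw [show a + b - x - a = b - x by ring] at this
      simpa using this) (by simpa using hga)
  simpa [intervalIntegral.integral_comp_sub_left g (a + b)] using key

end Ramp

section Antitone

variable {Z : ℝ → ℝ} {a b lam : ℝ}

theorem AntitoneOn.sq_sub_le_two_mul_integral_sub_left (hZ : AntitoneOn Z (Icc a b))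
    (hdrop : ∀ x ∈ Icc a b, ∀ y ∈ Icc a b, x ≤ y → Z x - Z y ≤ lam * (y - x))
    (hlam : 0 ≤ lam) (hab : a ≤ b) :
    (Z a - Z b) ^ 2 ≤ 2 * lam * ∫ x in a..b, (Z a - Z x) := by
  have ha : a ∈ Icc a b := ⟨le_rfl, hab⟩
  have hb : b ∈ Icc a b := ⟨hab, le_rfl⟩
  refine sq_le_two_mul_integral_of_ramp_le_right (g := fun x => Z a - Z x) hlam hab
    (intervalIntegrable_const.sub (uIcc_of_le hab ▸ hZ).intervalIntegrable)
    (fun x hx => sub_nonneg.2 (hZ ha hx hx.1)) (fun x hx => ?_) (hdrop a ha b hb hab)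
  linarith [hdrop x hx b hb hx.2]

theorem AntitoneOn.sq_sub_le_two_mul_integral_sub_right (hZ : AntitoneOn Z (Icc a b))
    (hdrop : ∀ x ∈ Icc a b, ∀ y ∈ Icc a b, x ≤ y → Z x - Z y ≤ lam * (y - x))
    (hlam : 0 ≤ lam) (hab : a ≤ b) :
    (Z a - Z b) ^ 2 ≤ 2 * lam * ∫ x in a..b, (Z x - Z b) := by
  have ha : a ∈ Icc a b := ⟨le_rfl, hab⟩
  have hb : b ∈ Icc a b := ⟨hab, le_rfl⟩
  refine sq_le_two_mul_integral_of_ramp_le_left (g := fun x => Z x - Z b) hlam hab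
    ((uIcc_of_le hab ▸ hZ).intervalIntegrable.sub intervalIntegrable_const)
    (fun x hx => sub_nonneg.2 (hZ hx hb hx.2)) (fun x hx => ?_) (hdrop a ha b hb hab)
  linarith [hdrop a ha x hx hx.1]

theorem AntitoneOn.sq_sub_le_two_mul_integral_const_sub (hZ : AntitoneOn Z (Icc a b))
    (hdrop : ∀ x ∈ Icc a b, ∀ y ∈ Icc a b, x ≤ y → Z x - Z y ≤ lam * (y - x))
    (hlam : 0 ≤ lam) (hab : a ≤ b) {ρ : ℝ} (hZρ : Z a ≤ ρ) :
    (Z a - Z b) ^ 2 ≤ 2 * lam * ∫ x in a..b, (ρ - Z x) := by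
  have hint : IntervalIntegrable Z volume a b := (uIcc_of_le hab ▸ hZ).intervalIntegrable
  calc (Z a - Z b) ^ 2 ≤ 2 * lam * ∫ x in a..b, (Z a - Z x) :=
        hZ.sq_sub_le_two_mul_integral_sub_left hdrop hlam hab
    _ ≤ 2 * lam * ∫ x in a..b, (ρ - Z x) := by
        gcongr
        exact integral_mono_on hab (intervalIntegrable_const.sub hint)
          (intervalIntegrable_const.sub hint) fun x _ => by linarith

end Antitone

theorem sub_eq_integral_const_sub {H Z : ℝ → ℝ} {ρ p q : ℝ}
    (hH : ∀ μ, H μ = ρ * μ - ∫ x in (0 : ℝ)..μ, Z x)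
    (hp : IntervalIntegrable Z volume 0 p) (hq : IntervalIntegrable Z volume 0 q) :
    H q - H p = ∫ x in p..q, (ρ - Z x) := by
  rw [hH, hH, integral_sub intervalIntegrable_const (hp.symm.trans hq), integral_const,
    smul_eq_mul, ← integral_interval_sub_left hq hp]
  ring

theorem stmt_4_general (μbar ρ lam : ℝ) (hlam : 0 ≤ lam)
    (Z : ℝ → ℝ) (hZmono : AntitoneOn Z (Set.Icc 0 μbar))
    (hZlip : ∀ a ∈ Set.Icc (0:ℝ) μbar, ∀ b ∈ Set.Icc (0:ℝ) μbar,
      |Z a - Z b| ≤ lam * |a - b|)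
    (H : ℝ → ℝ) (hH : ∀ μ, H μ = ρ * μ - ∫ x in (0:ℝ)..μ, Z x)
    (μstar : ℝ) (hμstar : μstar ∈ Set.Icc (0:ℝ) μbar)
    (hopt : Z μstar = ρ ∨ (μstar = 0 ∧ Z 0 ≤ ρ)) :
    ∀ μ ∈ Set.Icc (0:ℝ) μbar,
      |Z μ - Z μstar| ≤ Real.sqrt (2 * lam * (H μ - H μstar)) := by
  intro μ hμ
  have h0 : (0 : ℝ) ∈ Icc 0 μbar := ⟨le_rfl, hμstar.1.trans hμstar.2⟩
  have hint : ∀ s ∈ Icc 0 μbar, ∀ t ∈ Icc 0 μbar, IntervalIntegrable Z volume s t :=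
    fun s hs t ht => (hZmono.mono (uIcc_subset_Icc hs ht)).intervalIntegrable
  have hregret : H μ - H μstar = ∫ x in μstar..μ, (ρ - Z x) :=
    sub_eq_integral_const_sub hH (hint 0 h0 μstar hμstar) (hint 0 h0 μ hμ)
  have hdrop : ∀ x ∈ Icc 0 μbar, ∀ y ∈ Icc 0 μbar, x ≤ y → Z x - Z y ≤ lam * (y - x) :=
    fun x hx y hy hxy => by
      simpa [abs_of_nonpos (sub_nonpos.2 hxy)] using (le_abs_self _).trans (hZlip x hx y hy)
  refine Real.abs_le_sqrt ?_
  rcases le_total μstar μ with hle | hle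
  · have hsub : Icc μstar μ ⊆ Icc 0 μbar := Icc_subset_Icc hμstar.1 hμ.2
    have hZρ : Z μstar ≤ ρ := by rcases hopt with h | ⟨rfl, h⟩ <;> linarith
    rw [← neg_sub, neg_sq, hregret]
    exact (hZmono.mono hsub).sq_sub_le_two_mul_integral_const_sub
      (fun x hx y hy => hdrop x (hsub hx) y (hsub hy)) hlam hle hZρ
  · rcases hopt with hZρ | ⟨rfl, -⟩
    · have hsub : Icc μ μstar ⊆ Icc 0 μbar := Icc_subset_Icc hμ.1 hμstar.2
      calc (Z μ - Z μstar) ^ 2 ≤ 2 * lam * ∫ x in μ..μstar, (Z x - Z μstar) :=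
            (hZmono.mono hsub).sq_sub_le_two_mul_integral_sub_right
              (fun x hx y hy => hdrop x (hsub hx) y (hsub hy)) hlam hle
        _ = 2 * lam * (H μ - H μstar) := by
          rw [hregret, integral_symm, ← integral_neg, hZρ]
          simp
    · simp [le_antisymm hle hμ.1]

/-- Spend deviation is bounded by the square root of the artificial-objective regret. -/
theorem stmt_4 (μbar ρ lam : ℝ) (hμbar : 0 ≤ μbar) (hρ : 0 ≤ ρ) (hlam : 0 ≤ lam)
    (Z : ℝ → ℝ) (hZmono : AntitoneOn Z (Set.Icc 0 μbar))
    (hZlip : ∀ a ∈ Set.Icc (0:ℝ) μbar, ∀ b ∈ Set.Icc (0:ℝ) μbar,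
      |Z a - Z b| ≤ lam * |a - b|)
    (H : ℝ → ℝ) (hH : ∀ μ, H μ = ρ * μ - ∫ x in (0:ℝ)..μ, Z x)
    (μstar : ℝ) (hμstar : μstar ∈ Set.Icc (0:ℝ) μbar)
    (hopt : Z μstar = ρ ∨ (μstar = 0 ∧ Z 0 ≤ ρ)) :
    ∀ μ ∈ Set.Icc (0:ℝ) μbar,
      |Z μ - Z μstar| ≤ Real.sqrt (2 * lam * (H μ - H μstar)) :=
  stmt_4_general μbar ρ lam hlam Z hZmono hZlip H hH μstar hμstar hopt
end

section
/- Fix an agent k in an IR and MBB auction and any distribution F₋ₖ over opposing bid profiles b₋ₖ. For any bids bₖ ≤ bₖ' of agent k with E[xₖ(bₖ, b₋ₖ)] > 0, the expected payment per unit of expected allocation is monotone: E[pₖ(bₖ, b₋ₖ)] / E[xₖ(bₖ, b₋ₖ)] ≤ E[pₖ(bₖ', b₋ₖ)] / E[xₖ(bₖ', b₋ₖ)], provided E[xₖ(bₖ', b₋ₖ)] > 0. -/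
open MeasureTheory

/-- In an IR and MBB auction, expected payment per unit of expected allocation is
monotone in the bid. Here `Ω` carries the distribution `F₋ₖ` of opposing bid profiles,
and `x b ω`, `p b ω` are agent `k`'s allocation and payment at own bid `b`. -/
theorem stmt_7 {Ω : Type*} [MeasurableSpace Ω] (F : Measure Ω) [IsProbabilityMeasure F]
    (x p : ℝ → Ω → ℝ)
    (hxnonneg : ∀ b ω, 0 ≤ x b ω) (hpnonneg : ∀ b ω, 0 ≤ p b ω)
    (hxmono : ∀ ⦃b b' : ℝ⦄, b ≤ b' → ∀ ω, x b ω ≤ x b' ω)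
    (hpmono : ∀ ⦃b b' : ℝ⦄, b ≤ b' → ∀ ω, p b ω ≤ p b' ω)
    (hIR : ∀ b ω, p b ω ≤ b * x b ω)
    (hMBB : ∀ ⦃b b' : ℝ⦄, b ≤ b' → ∀ ω, b * (x b' ω - x b ω) ≤ p b' ω - p b ω)
    (hxint : ∀ b, Integrable (x b) F) (hpint : ∀ b, Integrable (p b) F)
    (bk bk' : ℝ) (hbk : 0 ≤ bk) (hle : bk ≤ bk')
    (hx0 : 0 < ∫ ω, x bk ω ∂F) (hx0' : 0 < ∫ ω, x bk' ω ∂F) :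
    (∫ ω, p bk ω ∂F) / (∫ ω, x bk ω ∂F) ≤ (∫ ω, p bk' ω ∂F) / (∫ ω, x bk' ω ∂F) := by
  set X := ∫ ω, x bk ω ∂F with hX
  set X' := ∫ ω, x bk' ω ∂F with hX'
  set P := ∫ ω, p bk ω ∂F with hP
  set P' := ∫ ω, p bk' ω ∂F with hP'
  have hXX' : X ≤ X' := integral_mono (hxint bk) (hxint bk') (hxmono hle)
  -- MBB in expectation: bk * (X' - X) ≤ P' - P
  have hMBBint : bk * (X' - X) ≤ P' - P := by
    have h1 : ∫ ω, bk * (x bk' ω - x bk ω) ∂F ≤ ∫ ω, (p bk' ω - p bk ω) ∂F :=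
      integral_mono (((hxint bk').sub (hxint bk)).const_mul bk)
        ((hpint bk').sub (hpint bk)) (hMBB hle)
    rwa [integral_const_mul, integral_sub (hxint bk') (hxint bk),
      integral_sub (hpint bk') (hpint bk)] at h1
  -- IR in expectation: P ≤ bk * X
  have hIRint : P ≤ bk * X := by
    have h1 : ∫ ω, p bk ω ∂F ≤ ∫ ω, bk * x bk ω ∂F :=
      integral_mono (hpint bk) ((hxint bk).const_mul bk) (hIR bk)
    rwa [integral_const_mul] at h1
  rw [div_le_div_iff₀ hx0 hx0']
  -- P * X' ≤ P' * X
  nlinarith [mul_le_mul_of_nonneg_right hIRint (sub_nonneg.mpr hXX'),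
    mul_le_mul_of_nonneg_right hMBBint (le_of_lt hx0)]
end

section
/- Let n = m and let 1 ≥ α₁ ≥ α₂ ≥ … ≥ α_m ≥ 0 be click rates with α_{m+1} = 0, and b₁ ≥ b₂ ≥ … ≥ b_n ≥ b_{n+1} = 0 be sorted bids. For any subset S ⊆ [n], let σ(i) for i ∈ S be 1 plus the number of elements of S with index less than i. Then ∑_{i ∉ S} b_{i+1} α_i + ∑_{i ∈ S} b_i α_i ≥ ∑_{i ∈ S} b_i α_{σ(i)}. -/
/-- GSP core inequality: seller revenue from agents outside `S` plus the GSP declared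
welfare of agents in `S` weakly exceeds the best declared welfare `S` could get from
the top `|S|` slots. -/
theorem stmt_8 (n : ℕ) (α b : ℕ → ℝ)
    (hα1 : α 1 ≤ 1)
    (hαmono : ∀ i, 1 ≤ i → i ≤ n → α (i + 1) ≤ α i)
    (hαnonneg : ∀ i, 1 ≤ i → i ≤ n + 1 → 0 ≤ α i)
    (hαn : α (n + 1) = 0)
    (hbmono : ∀ i, 1 ≤ i → i ≤ n → b (i + 1) ≤ b i)
    (hbn : b (n + 1) = 0)
    (S : Finset ℕ) (hS : S ⊆ Finset.Icc 1 n)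
    (σ : ℕ → ℕ) (hσ : ∀ i ∈ S, σ i = 1 + (S.filter (· < i)).card) :
    ∑ i ∈ S, b i * α (σ i) ≤
      ∑ i ∈ (Finset.Icc 1 n) \ S, b (i + 1) * α i + ∑ i ∈ S, b i * α i := by
  classical
  -- b is antitone on [1, n+1]
  have hb_le : ∀ i j, 1 ≤ i → i ≤ j → j ≤ n + 1 → b j ≤ b i := by
    intro i j hi hij hjn
    induction j with
    | zero => omega
    | succ m ih =>
      rcases Nat.eq_or_lt_of_le hij with h | h
      · rw [h]
      · calc b (m+1) ≤ b m := hbmono m (by omega) (by omega)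
          _ ≤ b i := ih (by omega) (by omega)
  have hb0 : ∀ j, 1 ≤ j → j ≤ n + 1 → 0 ≤ b j := by
    intro j hj hjn
    have h := hb_le j (n+1) hj hjn le_rfl
    rw [hbn] at h; linarith
  -- telescoping sum
  have tele : ∀ c a, a ≤ c → ∑ k ∈ Finset.Ico a c, (α k - α (k+1)) = α a - α c := by
    intro c
    induction c with
    | zero => intro a ha; interval_cases a; simp
    | succ m ih =>
      intro a ha
      rcases Nat.eq_or_lt_of_le ha with h | h
      · rw [h]; simp
      · have ham : a ≤ m := by omega
        rw [Finset.sum_Ico_succ_top ham, ih a ham]; ring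
  -- σ facts
  have hσ_pos : ∀ i ∈ S, 1 ≤ σ i := fun i hi => by rw [hσ i hi]; omega
  have hσ_le : ∀ i ∈ S, σ i ≤ i := by
    intro i hi
    have hi1 : 1 ≤ i := (Finset.mem_Icc.mp (hS hi)).1
    have hsub : S.filter (· < i) ⊆ Finset.Ico 1 i := by
      intro x hx
      simp only [Finset.mem_filter] at hx
      exact Finset.mem_Ico.mpr ⟨(Finset.mem_Icc.mp (hS hx.1)).1, hx.2⟩
    have hc := Finset.card_le_card hsub
    rw [Nat.card_Ico] at hc
    rw [hσ i hi]; omega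
  have hσmono : ∀ i ∈ S, ∀ j ∈ S, i < j → σ i < σ j := by
    intro i hi j hj hij
    have hsub : insert i (S.filter (· < i)) ⊆ S.filter (· < j) := by
      intro x hx
      rcases Finset.mem_insert.mp hx with h | h
      · subst h; exact Finset.mem_filter.mpr ⟨hi, hij⟩
      · simp only [Finset.mem_filter] at h ⊢
        exact ⟨h.1, h.2.trans hij⟩
    have hni : i ∉ S.filter (· < i) := by simp
    have hc := Finset.card_le_card hsub
    rw [Finset.card_insert_of_notMem hni] at hc
    rw [hσ i hi, hσ j hj]; omega
  -- the counting lemma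
  have hcard : ∀ k ∈ Finset.Icc 1 n,
      (S.filter (fun i => k ∈ Finset.Ico (σ i) i)).card ≤
      ((Finset.Icc 1 n \ S).filter (fun i => k ∈ Finset.Ico i (n+1))).card := by
    intro k hk
    obtain ⟨hk1, hkn⟩ := Finset.mem_Icc.mp hk
    set A := S.filter (fun i => k ∈ Finset.Ico (σ i) i) with hA
    set B := S.filter (fun i => i ≤ k) with hB
    set C := (Finset.Icc 1 n \ S).filter (fun i => k ∈ Finset.Ico i (n+1)) with hC
    have hdisj : Disjoint A B := by
      rw [Finset.disjoint_left]
      intro x hx hx'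
      simp only [hA, hB, Finset.mem_filter, Finset.mem_Ico] at hx hx'
      omega
    have h1 : (A ∪ B).card ≤ k := by
      have hmaps : ∀ x ∈ A ∪ B, σ x ∈ Finset.Icc 1 k := by
        intro x hx
        rcases Finset.mem_union.mp hx with h | h <;>
          simp only [hA, hB, Finset.mem_filter, Finset.mem_Ico] at h
        · exact Finset.mem_Icc.mpr ⟨hσ_pos x h.1, h.2.1⟩
        · exact Finset.mem_Icc.mpr ⟨hσ_pos x h.1, (hσ_le x h.1).trans h.2⟩
      have hinj : Set.InjOn σ (A ∪ B : Finset ℕ) := by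
        intro x hx y hy hxy
        have hx' : x ∈ A ∪ B := hx
        have hy' : y ∈ A ∪ B := hy
        have hxS : x ∈ S := by
          rcases Finset.mem_union.mp hx' with h | h <;> exact (Finset.mem_filter.mp h).1
        have hyS : y ∈ S := by
          rcases Finset.mem_union.mp hy' with h | h <;> exact (Finset.mem_filter.mp h).1
        rcases lt_trichotomy x y with h | h | h
        · exact absurd hxy (Nat.ne_of_lt (hσmono x hxS y hyS h))
        · exact h
        · exact absurd hxy.symm (Nat.ne_of_lt (hσmono y hyS x hxS h))
      calc (A ∪ B).card ≤ (Finset.Icc 1 k).card :=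
            Finset.card_le_card_of_injOn σ hmaps hinj
        _ = k := by rw [Nat.card_Icc]; omega
    have h2 : k ≤ B.card + C.card := by
      have hsub : Finset.Icc 1 k ⊆ B ∪ C := by
        intro x hx
        obtain ⟨hx1, hxk⟩ := Finset.mem_Icc.mp hx
        by_cases hxS : x ∈ S
        · exact Finset.mem_union_left _ (Finset.mem_filter.mpr ⟨hxS, hxk⟩)
        · refine Finset.mem_union_right _ (Finset.mem_filter.mpr ⟨?_, ?_⟩)
          · exact Finset.mem_sdiff.mpr ⟨Finset.mem_Icc.mpr ⟨hx1, by omega⟩, hxS⟩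
          · exact Finset.mem_Ico.mpr ⟨hxk, by omega⟩
      calc k = (Finset.Icc 1 k).card := by rw [Nat.card_Icc]; omega
        _ ≤ (B ∪ C).card := Finset.card_le_card hsub
        _ ≤ B.card + C.card := Finset.card_union_le B C
    have h3 := Finset.card_union_of_disjoint hdisj
    omega
  -- LHS bound
  have key1 : ∑ i ∈ S, b i * α (σ i) - ∑ i ∈ S, b i * α i ≤
      ∑ k ∈ Finset.Icc 1 n, (S.filter (fun i => k ∈ Finset.Ico (σ i) i)).card •
        (b (k+1) * (α k - α (k+1))) := by
    rw [← Finset.sum_sub_distrib]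
    have step1 : ∀ i ∈ S, b i * α (σ i) - b i * α i ≤
        ∑ k ∈ Finset.Ico (σ i) i, b (k+1) * (α k - α (k+1)) := by
      intro i hi
      obtain ⟨hi1, hin⟩ := Finset.mem_Icc.mp (hS hi)
      have htel : α (σ i) - α i = ∑ k ∈ Finset.Ico (σ i) i, (α k - α (k+1)) :=
        (tele i (σ i) (hσ_le i hi)).symm
      have heq : b i * α (σ i) - b i * α i
          = ∑ k ∈ Finset.Ico (σ i) i, b i * (α k - α (k+1)) := by
        rw [← Finset.mul_sum, ← htel]; ring
      rw [heq]
      apply Finset.sum_le_sum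
      intro k hk
      obtain ⟨hka, hkb⟩ := Finset.mem_Ico.mp hk
      have hk1 : 1 ≤ k := le_trans (hσ_pos i hi) hka
      have hd : 0 ≤ α k - α (k+1) := by
        have := hαmono k hk1 (by omega); linarith
      exact mul_le_mul_of_nonneg_right (hb_le (k+1) i (by omega) (by omega) (by omega)) hd
    calc ∑ i ∈ S, (b i * α (σ i) - b i * α i)
        ≤ ∑ i ∈ S, ∑ k ∈ Finset.Ico (σ i) i, b (k+1) * (α k - α (k+1)) :=
          Finset.sum_le_sum step1
      _ = ∑ i ∈ S, ∑ k ∈ Finset.Icc 1 n,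
            if k ∈ Finset.Ico (σ i) i then b (k+1) * (α k - α (k+1)) else 0 := by
          refine Finset.sum_congr rfl fun i hi => ?_
          rw [Finset.sum_ite_mem]
          congr 1
          rw [eq_comm, Finset.inter_eq_right]
          intro x hx
          obtain ⟨h1, h2⟩ := Finset.mem_Ico.mp hx
          obtain ⟨hi1, hin⟩ := Finset.mem_Icc.mp (hS hi)
          exact Finset.mem_Icc.mpr ⟨le_trans (hσ_pos i hi) h1, by omega⟩
      _ = ∑ k ∈ Finset.Icc 1 n, ∑ i ∈ S,
            if k ∈ Finset.Ico (σ i) i then b (k+1) * (α k - α (k+1)) else 0 :=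
          Finset.sum_comm
      _ = ∑ k ∈ Finset.Icc 1 n, (S.filter (fun i => k ∈ Finset.Ico (σ i) i)).card •
            (b (k+1) * (α k - α (k+1))) := by
          refine Finset.sum_congr rfl fun k hk => ?_
          rw [Finset.sum_ite, Finset.sum_const_zero, add_zero, Finset.sum_const]
  -- RHS bound
  have key2 : ∑ k ∈ Finset.Icc 1 n, (S.filter (fun i => k ∈ Finset.Ico (σ i) i)).card •
        (b (k+1) * (α k - α (k+1))) ≤
      ∑ i ∈ Finset.Icc 1 n \ S, b (i+1) * α i := by
    have expand : ∑ i ∈ Finset.Icc 1 n \ S, b (i+1) * α i =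
        ∑ k ∈ Finset.Icc 1 n,
          ∑ i ∈ (Finset.Icc 1 n \ S).filter (fun i => k ∈ Finset.Ico i (n+1)),
            b (i+1) * (α k - α (k+1)) := by
      calc ∑ i ∈ Finset.Icc 1 n \ S, b (i+1) * α i
          = ∑ i ∈ Finset.Icc 1 n \ S, ∑ k ∈ Finset.Ico i (n+1),
              b (i+1) * (α k - α (k+1)) := by
            refine Finset.sum_congr rfl fun i hi => ?_
            obtain ⟨hiT, _⟩ := Finset.mem_sdiff.mp hi
            obtain ⟨hi1, hin⟩ := Finset.mem_Icc.mp hiT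
            rw [← Finset.mul_sum, tele (n+1) i (by omega), hαn, sub_zero]
        _ = ∑ i ∈ Finset.Icc 1 n \ S, ∑ k ∈ Finset.Icc 1 n,
              if k ∈ Finset.Ico i (n+1) then b (i+1) * (α k - α (k+1)) else 0 := by
            refine Finset.sum_congr rfl fun i hi => ?_
            obtain ⟨hiT, _⟩ := Finset.mem_sdiff.mp hi
            obtain ⟨hi1, hin⟩ := Finset.mem_Icc.mp hiT
            rw [Finset.sum_ite_mem]
            congr 1
            rw [eq_comm, Finset.inter_eq_right]
            intro x hx
            obtain ⟨h1, h2⟩ := Finset.mem_Ico.mp hx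
            exact Finset.mem_Icc.mpr ⟨by omega, by omega⟩
        _ = ∑ k ∈ Finset.Icc 1 n, ∑ i ∈ Finset.Icc 1 n \ S,
              if k ∈ Finset.Ico i (n+1) then b (i+1) * (α k - α (k+1)) else 0 :=
            Finset.sum_comm
        _ = ∑ k ∈ Finset.Icc 1 n,
              ∑ i ∈ (Finset.Icc 1 n \ S).filter (fun i => k ∈ Finset.Ico i (n+1)),
                b (i+1) * (α k - α (k+1)) := by
            refine Finset.sum_congr rfl fun k hk => ?_
            rw [Finset.sum_filter]
    rw [expand]
    apply Finset.sum_le_sum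
    intro k hk
    obtain ⟨hk1, hkn⟩ := Finset.mem_Icc.mp hk
    have hd : 0 ≤ α k - α (k+1) := by have := hαmono k hk1 hkn; linarith
    have hb0k : 0 ≤ b (k+1) := hb0 (k+1) (by omega) (by omega)
    set C := (Finset.Icc 1 n \ S).filter (fun i => k ∈ Finset.Ico i (n+1)) with hC
    calc (S.filter (fun i => k ∈ Finset.Ico (σ i) i)).card • (b (k+1) * (α k - α (k+1)))
        ≤ C.card • (b (k+1) * (α k - α (k+1))) := by
          rw [nsmul_eq_mul, nsmul_eq_mul]
          exact mul_le_mul_of_nonneg_right (Nat.cast_le.mpr (hcard k hk))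
            (mul_nonneg hb0k hd)
      _ = ∑ i ∈ C, b (k+1) * (α k - α (k+1)) := (Finset.sum_const _).symm
      _ ≤ ∑ i ∈ C, b (i+1) * (α k - α (k+1)) := by
          apply Finset.sum_le_sum
          intro i hi
          simp only [hC, Finset.mem_filter, Finset.mem_sdiff, Finset.mem_Icc,
            Finset.mem_Ico] at hi
          exact mul_le_mul_of_nonneg_right
            (hb_le (i+1) (k+1) (by omega) (by omega) (by omega)) hd
  linarith
end

section
/- Consider the pacing multiplier recurrence μ_{t+1} = P_{[0,μ̄]}(μ_t + ε(z_t − ρ)) with ε > 0, ρ > 0, z_t ≥ 0, where P_{[0,μ̄]} denotes projection onto [0, μ̄]. Suppose that on an interval [t₁, t₂) we have μ_{t₁} = 0 and μ_t > 0 for all t₁ < t < t₂, with t₂ ≥ t₁ + 2. Then ∑_{t=t₁}^{t₂−2} z_t ≥ (t₂ − t₁ − 1)·ρ. -/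
/-- Over any epoch of the pacing recurrence, total spend is at least `ρ` per round
(excluding the last round of the epoch). -/
theorem stmt_11 (μbar ε ρ : ℝ) (hε : 0 < ε) (hρ : 0 < ρ)
    (μ z : ℕ → ℝ) (hz : ∀ t, 0 ≤ z t)
    (hrec : ∀ t, μ (t + 1) = min μbar (max 0 (μ t + ε * (z t - ρ))))
    (t₁ t₂ : ℕ) (ht : t₁ + 2 ≤ t₂)
    (hstart : μ t₁ = 0)
    (hpos : ∀ t, t₁ < t → t < t₂ → 0 < μ t) :
    ((t₂ - t₁ - 1 : ℕ) : ℝ) * ρ ≤ ∑ t ∈ Finset.Ico t₁ (t₂ - 1), z t := by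
  -- step lemma: if μ (t+1) > 0 then μ (t+1) ≤ μ t + ε * (z t - ρ)
  have step : ∀ t, 0 < μ (t + 1) → μ (t + 1) ≤ μ t + ε * (z t - ρ) := by
    intro t hp
    rw [hrec t] at hp ⊢
    rcases le_or_gt (μ t + ε * (z t - ρ)) 0 with h | h
    · simp [max_eq_left h] at hp
    · rw [max_eq_right h.le]
      exact min_le_right _ _
  -- μ t ≤ ε * ∑_{s in Ico t₁ t} (z s - ρ) for t₁ < t ≤ t₂ - 1
  have key : ∀ t, t₁ + 1 ≤ t → t ≤ t₂ - 1 →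
      μ t ≤ ε * ∑ s ∈ Finset.Ico t₁ t, (z s - ρ) := by
    intro t h1
    induction t, h1 using Nat.le_induction with
    | base =>
      intro h2
      have hp : 0 < μ (t₁ + 1) := hpos _ (by omega) (by omega)
      have := step t₁ hp
      rw [Finset.sum_Ico_eq_sum_range]
      simp [hstart] at this ⊢
      linarith
    | succ n hn ih =>
      intro h2
      have hp : 0 < μ (n + 1) := hpos _ (by omega) (by omega)
      have h1 := step n hp
      have hμn : μ n ≤ ε * ∑ s ∈ Finset.Ico t₁ n, (z s - ρ) := ih (by omega)
      rw [Finset.sum_Ico_succ_top (by omega : t₁ ≤ n)]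
      linarith [mul_add ε (∑ s ∈ Finset.Ico t₁ n, (z s - ρ)) (z n - ρ)]
  have hlast : 0 < μ (t₂ - 1) := hpos _ (by omega) (by omega)
  have hk := key (t₂ - 1) (by omega) le_rfl
  have hsum : 0 < ∑ s ∈ Finset.Ico t₁ (t₂ - 1), (z s - ρ) := by
    by_contra h
    push_neg at h
    have : ε * ∑ s ∈ Finset.Ico t₁ (t₂ - 1), (z s - ρ) ≤ 0 :=
      mul_nonpos_of_nonneg_of_nonpos hε.le h
    linarith
  rw [Finset.sum_sub_distrib, Finset.sum_const, Nat.card_Ico, nsmul_eq_mul] at hsum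
  have : ((t₂ - 1 - t₁ : ℕ) : ℝ) = ((t₂ - t₁ - 1 : ℕ) : ℝ) := by
    congr 1; omega
  rw [this] at hsum
  linarith [hsum]
end
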